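/- Let 1 ≤ k ≤ n and let M_{k+1} denote the set of subsets of {s_1, ..., s_{n-k-1}} (viewed inside the simple transpositions of S_{n+1}). Then Σ_{A ∈ M_{k+1}} ((n-k)!/|W_A|)(t-1)^{|A|} = E_{n-k}(t). -/

import Mathlib

open Polynomial Finset

/-- Number of descents of a permutation of `Fin m`. -/
noncomputable def des {m : ℕ} (σ : Equiv.Perm (Fin m)) : ℕ :=
  Nat.card {i : Fin m // ∃ h : (i : ℕ) + 1 < m, σ ⟨(i : ℕ) + 1, h⟩ < σ i}

/-- The `m`-th Eulerian polynomial `∑_{σ ∈ S_m} t^{des σ}` (over `ℚ`). -/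
noncomputable def Euler (m : ℕ) : Polynomial ℚ :=
  ∑ σ : Equiv.Perm (Fin m), X ^ des σ

/-- The simple transposition `s_{i+1} = (i+1, i+2)` in `S_{n+1}`. -/
def sT {n : ℕ} (i : Fin n) : Equiv.Perm (Fin (n + 1)) :=
  Equiv.swap i.castSucc i.succ

/-- The standard parabolic subgroup of `S_{n+1}` generated by a set of simple
transpositions (indexed by `A ⊆ Fin n`). -/
def Wsub {n : ℕ} (A : Finset (Fin n)) : Subgroup (Equiv.Perm (Fin (n + 1))) :=
  Subgroup.closure (sT '' (A : Set (Fin n)))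

/-!
Put `m = n - k`. The generators in `A` only move the first `m` letters, so `W_A` is the parabolic
subgroup of `S_m` generated by the adjacent transpositions at the positions in `A`. Every left
coset `σ W_A` contains exactly one permutation ascending at each position of `A`: a maximiser of
`∑ i * σ i` over the coset is one, since swapping a descent at a position of `A` increases this
weight; and two of them would differ by some `w ∈ W_A`, which preserves the blocks of positions
linked through `A`, on which both are increasing, forcing `w = 1`. Hence `m! / |W_A|` counts these
permutations, and exchanging the sums gives `∑_σ ∑_{A ⊆ Asc σ} (t - 1)^|A| = ∑_σ t^{asc σ}`, which
is `E_m(t)` because reversing the values exchanges ascents and descents.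
-/

namespace Equiv.Perm

variable {m : ℕ} {T : Set ℕ}

def HasAscentsOn (T : Set ℕ) (σ : Perm (Fin m)) : Prop :=
  ∀ x y : Fin m, (x : ℕ) ∈ T → (y : ℕ) = x + 1 → σ x < σ y

def parabolicSubgroup (m : ℕ) (T : Set ℕ) : Subgroup (Perm (Fin m)) :=
  Subgroup.closure {τ | ∃ x y : Fin m, (x : ℕ) ∈ T ∧ (y : ℕ) = x + 1 ∧ τ = swap x y}

def SameBlock (T : Set ℕ) (x y : Fin m) : Prop :=
  ∀ i, min (x : ℕ) y ≤ i → i < max (x : ℕ) y → i ∈ T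

theorem SameBlock.refl (x : Fin m) : SameBlock T x x :=
  fun _ h₁ h₂ => by omega

theorem SameBlock.symm {x y : Fin m} (h : SameBlock T x y) : SameBlock T y x :=
  fun i h₁ h₂ => h i (by omega) (by omega)

theorem SameBlock.trans {x y z : Fin m} (h : SameBlock T x y) (h' : SameBlock T y z) :
    SameBlock T x z := fun i h₁ h₂ => by
  by_cases hi : min (x : ℕ) y ≤ i ∧ i < max (x : ℕ) y
  · exact h i hi.1 hi.2
  · exact h' i (by omega) (by omega)

theorem sameBlock_apply_of_mem_parabolicSubgroup {w : Perm (Fin m)}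
    (hw : w ∈ parabolicSubgroup m T) (x : Fin m) : SameBlock T x (w x) := by
  induction hw using Subgroup.closure_induction generalizing x with
  | mem τ hτ =>
    obtain ⟨a, b, ha, hb, rfl⟩ := hτ
    have hab : SameBlock T a b := fun i h₁ h₂ => by
      obtain rfl : i = a := by omega
      exact ha
    rcases eq_or_ne x a with rfl | hxa
    · simpa using hab
    rcases eq_or_ne x b with rfl | hxb
    · simpa using hab.symm
    · simpa [swap_apply_of_ne_of_ne hxa hxb] using SameBlock.refl x
  | one => exact SameBlock.refl x
  | mul u v _ _ hu hv => exact (hv x).trans (hu (v x))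
  | inv u _ hu => simpa using (hu (u⁻¹ x)).symm

theorem HasAscentsOn.apply_lt_apply {σ : Perm (Fin m)} (hσ : HasAscentsOn T σ) {x y : Fin m}
    (hxy : x < y) (hb : SameBlock T x y) : σ x < σ y := by
  obtain ⟨d, hd⟩ : ∃ d, (y : ℕ) = x + d + 1 := ⟨y - x - 1, by omega⟩
  induction d generalizing y with
  | zero => exact hσ x y (hb x (by omega) (by omega)) hd
  | succ d ih =>
    let z : Fin m := ⟨x + d + 1, by omega⟩
    have hz : (z : ℕ) = x + d + 1 := rfl
    have hxz : σ x < σ z := ih (Fin.lt_def.2 (by omega))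
      (fun i h₁ h₂ => hb i (by omega) (by omega)) rfl
    exact hxz.trans (hσ z y (hb z (by omega) (by omega)) (by omega))

theorem le_apply_of_forall_lt_apply_eq {α : Type*} [LinearOrder α] {w : Perm α} {x : α}
    (h : ∀ y < x, w y = y) : x ≤ w x :=
  not_lt.1 fun hlt => hlt.ne (w.injective (h _ hlt))

theorem eq_one_of_hasAscentsOn_mul {σ w : Perm (Fin m)} (hw : w ∈ parabolicSubgroup m T)
    (hσ : HasAscentsOn T σ) (hσw : HasAscentsOn T (σ * w)) : w = 1 := by
  refine Equiv.ext fun x => ?_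
  induction x using WellFoundedLT.induction with
  | _ x ih =>
  by_contra hne
  have hx : x < w x := (le_apply_of_forall_lt_apply_eq ih).lt_of_ne' hne
  have hx' : x < w⁻¹ x :=
    (le_apply_of_forall_lt_apply_eq fun y hy => inv_eq_iff_eq.2 (ih y hy).symm).lt_of_ne
      fun h => hne (eq_inv_iff_eq.1 h)
  have h₁ := hσ.apply_lt_apply hx (sameBlock_apply_of_mem_parabolicSubgroup hw x)
  have h₂ := hσw.apply_lt_apply hx' (sameBlock_apply_of_mem_parabolicSubgroup (inv_mem hw) x)
  simp only [mul_apply, coe_inv, apply_symm_apply] at h₂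
  exact h₁.asymm h₂

def positionWeight (σ : Perm (Fin m)) : ℤ :=
  ∑ i, (i.val : ℤ) * (σ i).val

theorem positionWeight_mul_swap (σ : Perm (Fin m)) {x y : Fin m} (hxy : x ≠ y) :
    positionWeight (σ * swap x y) =
      positionWeight σ + ((y.val : ℤ) - x.val) * ((σ x).val - (σ y).val) := by
  have hdiff : positionWeight (σ * swap x y) - positionWeight σ =
      ∑ j, (((swap x y j).val : ℤ) - j.val) * (σ j).val := by
    have hswap : positionWeight (σ * swap x y) = ∑ j, ((swap x y j).val : ℤ) * (σ j).val :=
      Fintype.sum_equiv (swap x y) _ _ fun i => by simp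
    rw [hswap, positionWeight, ← Finset.sum_sub_distrib]
    simp [sub_mul]
  rw [Fintype.sum_eq_add x y hxy fun j hj => by simp [swap_apply_of_ne_of_ne hj.1 hj.2]] at hdiff
  simp only [swap_apply_left, swap_apply_right] at hdiff
  linarith

theorem exists_mem_parabolicSubgroup_hasAscentsOn_mul (T : Set ℕ) (σ : Perm (Fin m)) :
    ∃ w ∈ parabolicSubgroup m T, HasAscentsOn T (σ * w) := by
  classical
  obtain ⟨w, hw, hmax⟩ := Finset.exists_max_image {w | w ∈ parabolicSubgroup m T}
    (fun w => positionWeight (σ * w)) ⟨1, by simp⟩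
  rw [Finset.mem_filter_univ] at hw
  refine ⟨w, hw, fun x y hx hy => lt_of_not_ge fun hle => ?_⟩
  have hxy : x ≠ y := fun h => by rw [h] at hy; omega
  have hlt : (σ * w) y < (σ * w) x := hle.lt_of_ne ((σ * w).injective.ne hxy.symm)
  have hgen : swap x y ∈ parabolicSubgroup m T := Subgroup.subset_closure ⟨x, y, hx, hy, rfl⟩
  have := hmax (w * swap x y) (by simpa using mul_mem hw hgen)
  rw [← mul_assoc, positionWeight_mul_swap _ hxy] at this
  have : (0 : ℤ) < ((y.val : ℤ) - x.val) * (((σ * w) x).val - ((σ * w) y).val) :=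
    mul_pos (by omega) (by rw [Fin.lt_def] at hlt; omega)
  linarith

noncomputable def hasAscentsOnEquivQuotient (T : Set ℕ) :
    {σ : Perm (Fin m) // HasAscentsOn T σ} ≃ Perm (Fin m) ⧸ parabolicSubgroup m T := by
  refine Equiv.ofBijective (fun σ => (σ.1 : Perm (Fin m) ⧸ parabolicSubgroup m T)) ⟨?_, ?_⟩
  · rintro ⟨σ, hσ⟩ ⟨τ, hτ⟩ h
    have hw := QuotientGroup.eq.1 h
    have := eq_one_of_hasAscentsOn_mul hw hσ (by rwa [mul_inv_cancel_left])
    exact Subtype.ext (inv_mul_eq_one.1 this)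
  · refine fun q => QuotientGroup.induction_on q fun σ => ?_
    obtain ⟨w, hw, hσw⟩ := exists_mem_parabolicSubgroup_hasAscentsOn_mul T σ
    exact ⟨⟨σ * w, hσw⟩, QuotientGroup.eq.2 (by simpa [mul_assoc] using inv_mem hw)⟩

theorem card_parabolicSubgroup_mul_card_hasAscentsOn (m : ℕ) (T : Set ℕ) :
    Nat.card (parabolicSubgroup m T) * Nat.card {σ : Perm (Fin m) // HasAscentsOn T σ} =
      m.factorial := by
  rw [Nat.card_congr (hasAscentsOnEquivQuotient T), ← Subgroup.index, Subgroup.card_mul_index,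
    Nat.card_perm, Nat.card_fin]

theorem viaEmbedding_swap {α β : Type*} [DecidableEq α] [DecidableEq β] (ι : α ↪ β) (a b : α) :
    (swap a b).viaEmbedding ι = swap (ι a) (ι b) := by
  ext x
  by_cases hx : x ∈ Set.range ι
  · obtain ⟨y, rfl⟩ := hx
    rw [viaEmbedding_apply, ι.injective.map_swap]
  · rw [viaEmbedding_apply_of_notMem _ _ _ hx, swap_apply_of_ne_of_ne] <;>
      rintro rfl <;> exact hx ⟨_, rfl⟩

/-- Indexed by `Fin n`, like the generators `sT`, so that it can be compared with `A`. -/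
def ascentFinset (n : ℕ) (σ : Perm (Fin m)) : Finset (Fin n) :=
  {j | ∃ x y : Fin m, (x : ℕ) = j ∧ (y : ℕ) = j + 1 ∧ σ x < σ y}

theorem hasAscentsOn_image_val_iff {n : ℕ} {A : Finset (Fin n)} (hA : ∀ j ∈ A, (j : ℕ) + 1 < m)
    (σ : Perm (Fin m)) :
    HasAscentsOn (Fin.val '' (A : Set (Fin n))) σ ↔ A ⊆ ascentFinset n σ := by
  simp only [HasAscentsOn, ascentFinset, Set.mem_image, Finset.mem_coe, subset_iff,
    mem_filter_univ]
  constructor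
  · intro h j hj
    exact ⟨⟨j, by have := hA j hj; omega⟩, ⟨j + 1, hA j hj⟩, rfl, rfl, h _ _ ⟨j, hj, rfl⟩ rfl⟩
  · rintro h x y ⟨j, hj, hjx⟩ hy
    obtain ⟨x', y', hx', hy', hlt⟩ := h hj
    rwa [show x' = x from Fin.ext (by omega), show y' = y from Fin.ext (by omega)] at hlt

theorem val_add_one_lt_of_mem_ascentFinset {n : ℕ} {σ : Perm (Fin m)} {j : Fin n}
    (hj : j ∈ ascentFinset n σ) : (j : ℕ) + 1 < m := by
  obtain ⟨x, y, -, hy, -⟩ := (mem_filter_univ _).1 hj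
  omega

theorem card_ascentFinset {n : ℕ} (hm : m ≤ n + 1) (σ : Perm (Fin m)) :
    #(ascentFinset n σ) = des (Fin.revPerm * σ) := by
  rw [des, Nat.card_eq_fintype_card, Fintype.card_subtype]
  have hlt {j} (hj : j ∈ ascentFinset n σ) : (j : ℕ) + 1 < m :=
    val_add_one_lt_of_mem_ascentFinset hj
  refine Finset.card_bij (fun j hj => ⟨j, by have := hlt hj; omega⟩) (fun j hj => ?_)
    (fun i _ j _ h => Fin.ext (Fin.mk.inj h)) fun i hi => ?_
  · obtain ⟨x, y, hx, hy, hσ⟩ := (mem_filter_univ _).1 hj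
    refine (mem_filter_univ _).2 ⟨hlt hj, ?_⟩
    simp only [mul_apply, Fin.revPerm_apply, Fin.rev_lt_rev]
    convert hσ using 2 <;> exact Fin.ext (by simp [hx, hy])
  · obtain ⟨hi, hσ⟩ := (mem_filter_univ _).1 hi
    refine ⟨⟨i, by omega⟩,
      (mem_filter_univ _).2 ⟨⟨i, by omega⟩, ⟨i + 1, hi⟩, rfl, rfl, ?_⟩, rfl⟩
    simpa [Fin.rev_lt_rev] using hσ

end Equiv.Perm

open Equiv.Perm

theorem Wsub_eq_map_parabolicSubgroup {n m : ℕ} (hm : m ≤ n + 1) {A : Finset (Fin n)}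
    (hA : ∀ j ∈ A, (j : ℕ) + 1 < m) :
    Wsub A = (parabolicSubgroup m (Fin.val '' (A : Set (Fin n)))).map
      (viaEmbeddingHom (Fin.castLEEmb hm)) := by
  rw [parabolicSubgroup, MonoidHom.map_closure, Wsub]
  congr 1
  ext τ
  simp only [Set.mem_image, Set.mem_ofPred_eq, Finset.mem_coe, sT]
  constructor
  · rintro ⟨j, hj, rfl⟩
    refine ⟨_, ⟨⟨j, by have := hA j hj; omega⟩, ⟨j + 1, hA j hj⟩, ⟨j, hj, rfl⟩, rfl, rfl⟩, ?_⟩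
    rw [viaEmbeddingHom_apply, viaEmbedding_swap]
    rfl
  · rintro ⟨_, ⟨x, y, ⟨j, hj, hjx⟩, hy, rfl⟩, rfl⟩
    refine ⟨j, hj, ?_⟩
    rw [viaEmbeddingHom_apply, viaEmbedding_swap]
    congr 1 <;> ext <;> simp <;> omega

theorem factorial_div_card_Wsub {n m : ℕ} (hm : m ≤ n + 1) {A : Finset (Fin n)}
    (hA : ∀ j ∈ A, (j : ℕ) + 1 < m) :
    (m.factorial : ℚ) / Nat.card (Wsub A) =
      #{σ : Equiv.Perm (Fin m) | A ⊆ ascentFinset n σ} := by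
  have hcard :
      Nat.card (Wsub A) = Nat.card (parabolicSubgroup m (Fin.val '' (A : Set (Fin n)))) := by
    rw [Wsub_eq_map_parabolicSubgroup hm hA,
      Subgroup.card_map_of_injective (viaEmbeddingHom_injective _)]
  have hcount :
      Nat.card {σ : Equiv.Perm (Fin m) // HasAscentsOn (Fin.val '' (A : Set (Fin n))) σ} =
        #{σ : Equiv.Perm (Fin m) | A ⊆ ascentFinset n σ} := by
    rw [Nat.card_congr (Equiv.subtypeEquivRight (hasAscentsOn_image_val_iff hA)),
      Nat.card_eq_fintype_card, Fintype.card_subtype]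
  rw [hcard, ← hcount, ← card_parabolicSubgroup_mul_card_hasAscentsOn, Nat.cast_mul,
    mul_div_cancel_left₀ _ (Nat.cast_ne_zero.2 Nat.card_pos.ne')]

theorem Finset.sum_powerset_card_subset_nsmul {ι κ M : Type*} [DecidableEq ι] [Fintype κ]
    [AddCommMonoid M] {s : Finset ι} {f : κ → Finset ι} (hf : ∀ c, f c ⊆ s)
    (g : Finset ι → M) :
    ∑ A ∈ s.powerset, #{c | A ⊆ f c} • g A = ∑ c, ∑ A ∈ (f c).powerset, g A := by
  simp_rw [← sum_const]
  exact sum_comm' fun A c => by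
    simp only [mem_powerset, mem_filter_univ, mem_univ, and_true]
    exact ⟨And.right, fun h => ⟨h.trans (hf c), h⟩⟩

theorem Finset.sum_powerset_sub_one_pow {ι R : Type*} [CommRing R] (s : Finset ι) (x : R) :
    ∑ A ∈ s.powerset, (x - 1) ^ #A = x ^ #s := by
  simpa using sum_pow_mul_eq_add_pow (x - 1) 1 s

theorem sum_Mk1_eq_eulerian_general (n k : ℕ) :
    ∑ A ∈ Finset.univ.filter (fun A : Finset (Fin n) =>
        ∀ j ∈ A, (j : ℕ) < n - k - 1),
      (((n - k).factorial : ℚ) / (Nat.card ↥(Wsub A) : ℚ)) • (X - 1) ^ A.card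
      = Euler (n - k) := by
  set m := n - k
  have hm : m ≤ n + 1 := by omega
  set S : Finset (Fin n) := {j | (j : ℕ) + 1 < m}
  have hdom :
      univ.filter (fun A : Finset (Fin n) => ∀ j ∈ A, (j : ℕ) < m - 1) = S.powerset := by
    ext A
    simp only [mem_filter_univ, mem_powerset, subset_iff, S]
    exact forall₂_congr fun j _ => by omega
  have hasc (σ : Equiv.Perm (Fin m)) : ascentFinset n σ ⊆ S := fun j hj =>
    (mem_filter_univ j).2 (val_add_one_lt_of_mem_ascentFinset hj)
  calc _ = ∑ A ∈ S.powerset,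
          #{σ : Equiv.Perm (Fin m) | A ⊆ ascentFinset n σ} • (X - 1 : ℚ[X]) ^ #A := by
        rw [hdom]
        refine sum_congr rfl fun A hA => ?_
        rw [factorial_div_card_Wsub hm fun j hj => (mem_filter_univ j).1 (mem_powerset.1 hA hj),
          Nat.cast_smul_eq_nsmul]
    _ = ∑ σ : Equiv.Perm (Fin m), ∑ A ∈ (ascentFinset n σ).powerset, (X - 1 : ℚ[X]) ^ #A :=
        sum_powerset_card_subset_nsmul hasc _
    _ = ∑ σ : Equiv.Perm (Fin m), X ^ des (Fin.revPerm * σ) := by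
        simp_rw [sum_powerset_sub_one_pow, card_ascentFinset hm]
    _ = Euler m := Fintype.sum_equiv (Equiv.mulLeft Fin.revPerm) _ _ fun _ => rfl

theorem sum_Mk1_eq_eulerian (n k : ℕ) (hk1 : 1 ≤ k) (hkn : k ≤ n) :
    ∑ A ∈ Finset.univ.filter (fun A : Finset (Fin n) =>
        ∀ j ∈ A, (j : ℕ) < n - k - 1),
      (((n - k).factorial : ℚ) / (Nat.card ↥(Wsub A) : ℚ)) • (X - 1) ^ A.card
      = Euler (n - k) :=
  sum_Mk1_eq_eulerian_general n k
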